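/- arXiv:1010.5172 — 2 statements merged into one kernel-verified Lean document; each statement's English description precedes it below -/
import Mathlib

section
/- For m ≥ 2, f_m(x) := ∫_0^1 G(x - t) dt, where G(x) = (sign(x)/2)((e^x - e^{-x})/2 - Σ_{k=1}^{m-1} x^{2k-1}/(2k-1)!), satisfies for all x ∈ [0,1]: f_m(x) = (e^x + e^{-x} + e^{1-x} + e^{x-1} - 4)/4 - Σ_{k=1}^{m-1} (x^{2k} + (1-x)^{2k})/(2·(2k)!). -/
/-!
After the substitution `s = x - t` the integral becomes `∫_{x-1}^{x} sign s · S(s)/2 ds`, where `S`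
is the Taylor remainder of `sinh` after the terms of degree `< 2m - 1`. An antiderivative of `S` is
the corresponding remainder `C` of `cosh`, which is even and vanishes at `0`; splitting the integral
at `0` gives `(C(x) + C(1 - x))/2`, which is the stated closed form.
-/

open Real Finset intervalIntegral

open Nat

theorem hasDerivAt_pow_succ_div_factorial (j : ℕ) (y : ℝ) :
    HasDerivAt (fun y : ℝ => y ^ (j + 1) / (j + 1)!) (y ^ j / j !) y := by
  refine ((hasDerivAt_pow (j + 1) y).div_const ((j + 1)! : ℝ)).congr_deriv ?_
  rw [Nat.factorial_succ, Nat.cast_mul]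
  field_simp
  simp

theorem integral_sign_mul_of_nonpos_of_nonneg {H F : ℝ → ℝ} (hF : ∀ y, HasDerivAt F (H y) y)
    (hH : Continuous H) {a b : ℝ} (ha : a ≤ 0) (hb : 0 ≤ b) :
    ∫ s in a..b, Real.sign s * H s = F a + F b - 2 * F 0 := by
  have hneg : Set.EqOn (fun s => Real.sign s * H s) (fun s => -H s) (Set.Ioo a 0) :=
    fun s hs => by simp [Real.sign_of_neg hs.2]
  have hpos : Set.EqOn (fun s => Real.sign s * H s) H (Set.Ioo 0 b) :=
    fun s hs => by simp [Real.sign_of_pos hs.1]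
  have hI₁ : IntervalIntegrable (fun s => Real.sign s * H s) MeasureTheory.volume a 0 :=
    (hH.intervalIntegrable a 0).neg.congr_uIoo (by rw [Set.uIoo_of_le ha]; exact hneg.symm)
  have hI₂ : IntervalIntegrable (fun s => Real.sign s * H s) MeasureTheory.volume 0 b :=
    (hH.intervalIntegrable 0 b).congr_uIoo (by rw [Set.uIoo_of_le hb]; exact hpos.symm)
  rw [← integral_add_adjacent_intervals hI₁ hI₂, integral_congr_Ioo_of_le ha hneg,
    integral_congr_Ioo_of_le hb hpos, integral_neg,
    integral_eq_sub_of_hasDerivAt (fun y _ => hF y) (hH.intervalIntegrable _ _),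
    integral_eq_sub_of_hasDerivAt (fun y _ => hF y) (hH.intervalIntegrable _ _)]
  ring

noncomputable def sinhTail (n : ℕ) (y : ℝ) : ℝ :=
  sinh y - ∑ k ∈ Icc 1 n, y ^ (2 * k - 1) / (2 * k - 1)!

noncomputable def coshTail (n : ℕ) (y : ℝ) : ℝ :=
  cosh y - 1 - ∑ k ∈ Icc 1 n, y ^ (2 * k) / (2 * k)!

theorem continuous_sinhTail (n : ℕ) : Continuous (sinhTail n) := by
  unfold sinhTail
  fun_prop

theorem hasDerivAt_coshTail (n : ℕ) (y : ℝ) : HasDerivAt (coshTail n) (sinhTail n y) y := by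
  refine ((hasDerivAt_cosh y).sub_const 1).sub (HasDerivAt.fun_sum fun k hk => ?_)
  obtain ⟨j, rfl⟩ : ∃ j, k = j + 1 := Nat.exists_eq_add_of_le' (mem_Icc.1 hk).1
  simpa [mul_add] using hasDerivAt_pow_succ_div_factorial (2 * j + 1) y

theorem coshTail_zero (n : ℕ) : coshTail n 0 = 0 := by
  rw [coshTail, sum_eq_zero fun k hk => by simp [Nat.one_le_iff_ne_zero.1 (mem_Icc.1 hk).1]]
  simp

theorem coshTail_neg (n : ℕ) (y : ℝ) : coshTail n (-y) = coshTail n y := by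
  simp [coshTail, Even.neg_pow (even_two_mul _)]

theorem stmt_2_general (m : ℕ)
    (G : ℝ → ℝ)
    (hG : ∀ x : ℝ, G x =
      (Real.sign x / 2) * ((Real.exp x - Real.exp (-x)) / 2 -
        ∑ k ∈ Finset.Icc 1 (m-1), x ^ (2*k - 1) / (Nat.factorial (2*k - 1)))) :
    ∀ x ∈ Set.Icc (0:ℝ) 1,
      (∫ t in (0:ℝ)..1, G (x - t)) =
        (Real.exp x + Real.exp (-x) + Real.exp (1 - x) + Real.exp (x - 1) - 4) / 4 -
          ∑ k ∈ Finset.Icc 1 (m-1),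
            (x ^ (2*k) + (1 - x) ^ (2*k)) / (2 * Nat.factorial (2*k)) := by
  intro x hx
  have hG' : G = fun s => Real.sign s * (sinhTail (m - 1) s / 2) :=
    funext fun s => by rw [hG, sinhTail, sinh_eq]; ring
  have hsymm : coshTail (m - 1) (x - 1) = coshTail (m - 1) (1 - x) := by
    rw [← coshTail_neg, neg_sub]
  rw [integral_comp_sub_left G x, sub_zero, hG',
    integral_sign_mul_of_nonpos_of_nonneg (F := fun y => coshTail (m - 1) y / 2)
      (fun y => (hasDerivAt_coshTail _ y).div_const 2) ((continuous_sinhTail _).div_const 2)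
      (by linarith [hx.2]) hx.1, hsymm, coshTail_zero]
  simp only [coshTail, cosh_eq, neg_sub, add_div, sum_add_distrib, mul_comm (2 : ℝ), ← div_div,
    ← sum_div]
  ring

/-- For `m ≥ 2`, `f_m(x) = ∫_0^1 G(x - t) dt` with
`G(x) = (sign x / 2)((eˣ - e⁻ˣ)/2 - ∑_{k=1}^{m-1} x^{2k-1}/(2k-1)!)` has the
explicit value stated for all `x ∈ [0,1]`. -/
theorem stmt_2 (m : ℕ) (hm : 2 ≤ m)
    (G : ℝ → ℝ)
    (hG : ∀ x : ℝ, G x =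
      (Real.sign x / 2) * ((Real.exp x - Real.exp (-x)) / 2 -
        ∑ k ∈ Finset.Icc 1 (m-1), x ^ (2*k - 1) / (Nat.factorial (2*k - 1)))) :
    ∀ x ∈ Set.Icc (0:ℝ) 1,
      (∫ t in (0:ℝ)..1, G (x - t)) =
        (Real.exp x + Real.exp (-x) + Real.exp (1 - x) + Real.exp (x - 1) - 4) / 4 -
          ∑ k ∈ Finset.Icc 1 (m-1),
            (x ^ (2*k) + (1 - x) ^ (2*k)) / (2 * Nat.factorial (2*k)) :=
  stmt_2_general m G hG
end

section
/- The coefficients of the m = 2 optimal quadrature formula sum correctly to reproduce constants: with K(h) = (2e^h − 2 − he^h − h)(λ_1 − 1) / (2(e^h − 1)²(λ_1 + λ_1^{N+1})), C_0 = 1 − h/(e^h − 1) − K(h)(λ_1 − λ_1^N), C_β = h + K(h)((e^h − λ_1)λ_1^β + (1 − λ_1 e^h)λ_1^{N−β}) for 1 ≤ β ≤ N−1, and C_N = −1 + e^h h/(e^h − 1) − K(h)(λ_1 − λ_1^N)e^h, one has Σ_{β=0}^N C_β = 1. -/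
open Real Finset

/-- The `m = 2` optimal coefficients sum to 1 (exactness on constants). -/
theorem stmt_13 (N : ℕ) (hN : 2 ≤ N) (h : ℝ) (hh : h = 1 / N)
    (lam1 : ℝ) (hl0 : 0 < lam1) (hl1 : lam1 < 1) (hlne : lam1 ≠ Real.exp (-h))
    (hroot : (2*h*Real.exp h + 1 - Real.exp (2*h)) * lam1^2 +
      (2*(Real.exp (2*h) - 1) - 2*h*(Real.exp (2*h) + 1)) * lam1 +
      (2*h*Real.exp h + 1 - Real.exp (2*h)) = 0)
    (K : ℝ)
    (hK : K = (2*Real.exp h - 2 - h*Real.exp h - h) * (lam1 - 1) /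
      (2*(Real.exp h - 1)^2 * (lam1 + lam1^(N+1))))
    (C : ℕ → ℝ)
    (hC0 : C 0 = 1 - h/(Real.exp h - 1) - K * (lam1 - lam1^N))
    (hCmid : ∀ β : ℕ, 1 ≤ β → β ≤ N - 1 →
      C β = h + K * ((Real.exp h - lam1) * lam1^β + (1 - lam1*Real.exp h) * lam1^(N-β)))
    (hCN : C N = -1 + Real.exp h * h/(Real.exp h - 1) - K * (lam1 - lam1^N) * Real.exp h) :
    ∑ β ∈ Finset.range (N + 1), C β = 1 := by
  have hNpos : 0 < N := by omega
  have hNne : (N : ℝ) ≠ 0 := Nat.cast_ne_zero.mpr hNpos.ne'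
  have hhpos : 0 < h := by rw [hh]; positivity
  have hE1 : Real.exp h - 1 ≠ 0 := by
    have : (1:ℝ) < Real.exp h := by
      rw [← Real.exp_zero]; exact Real.exp_lt_exp.mpr hhpos
    linarith
  have ha1 : lam1 ≠ 1 := hl1.ne
  have ha1' : (1 : ℝ) - lam1 ≠ 0 := by linarith
  -- split the sum
  have hsplit : ∑ β ∈ Finset.range (N + 1), C β
      = C 0 + (∑ β ∈ Finset.Ico 1 N, C β) + C N := by
    rw [Finset.range_eq_Ico, ← Finset.sum_Ico_consecutive _ (by omega : 0 ≤ 1) (by omega : 1 ≤ N + 1),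
      Finset.sum_Ico_succ_top (by omega : 1 ≤ N)]
    simp
    ring
  rw [hsplit]
  -- rewrite middle
  have hmid : ∑ β ∈ Finset.Ico 1 N, C β
      = ∑ β ∈ Finset.Ico 1 N,
        (h + K * ((Real.exp h - lam1) * lam1^β + (1 - lam1*Real.exp h) * lam1^(N-β))) := by
    apply Finset.sum_congr rfl
    intro β hβ
    rw [Finset.mem_Ico] at hβ
    exact hCmid β hβ.1 (by omega)
  rw [hmid]
  have hrefl : ∑ β ∈ Finset.Ico 1 N, lam1^(N-β) = ∑ β ∈ Finset.Ico 1 N, lam1^β := by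
    apply Finset.sum_nbij' (fun i => N - i) (fun i => N - i)
    · intro a ha; simp only [Finset.mem_Ico] at *; omega
    · intro a ha; simp only [Finset.mem_Ico] at *; omega
    · intro a ha; simp only [Finset.mem_Ico] at ha; omega
    · intro a ha; simp only [Finset.mem_Ico] at ha; omega
    · intro a ha; simp only [Finset.mem_Ico] at ha
      congr 1
  have hgeom : ∑ β ∈ Finset.Ico 1 N, lam1^β = (lam1^N - lam1^1) / (lam1 - 1) :=
    geom_sum_Ico ha1 (by omega)
  have hsum : ∑ β ∈ Finset.Ico 1 N,
      (h + K * ((Real.exp h - lam1) * lam1^β + (1 - lam1*Real.exp h) * lam1^(N-β)))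
      = (N - 1) * h + K * ((Real.exp h - lam1) + (1 - lam1*Real.exp h)) *
        ((lam1^N - lam1) / (lam1 - 1)) := by
    rw [Finset.sum_add_distrib, Finset.sum_const, Nat.card_Ico]
    rw [← Finset.mul_sum, Finset.sum_add_distrib, ← Finset.mul_sum, ← Finset.mul_sum,
      hrefl, hgeom]
    simp only [nsmul_eq_mul]
    rw [Nat.cast_sub (by omega : 1 ≤ N)]
    push_cast
    ring
  have ha1'' : lam1 - 1 ≠ 0 := by intro hc; apply ha1; linarith
  have key : (Real.exp h - lam1 + (1 - lam1*Real.exp h)) * ((lam1^N - lam1) / (lam1 - 1))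
      = (1 + Real.exp h) * (lam1 - lam1^N) := by
    field_simp
    ring
  rw [hsum, hC0, hCN, mul_assoc K, key]
  have hNh : (N : ℝ) * h = 1 := by rw [hh]; field_simp
  field_simp
  linear_combination (Real.exp h - 1) * hNh
end
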